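/- Let {M¹_L} →(ξ¹) {M²_L} →(ξ²) {M³_L} →(ξ³) {M⁴_L} be a sequence of controlled homomorphisms between inductive systems over ℝ≥0 that is asymptotically exact at {M²_L} and at {M³_L}. If ξ¹ and ξ³ are both controlled equivalent to the zero homomorphism, then there exists a controlled homomorphism s : {M³_L} → {M²_L} such that ξ²∘s and s∘ξ² are each controlled equivalent to the identity. -/

import Mathlib

/-!
Exactness at `M₂` together with `ξ₁ ∼ 0` makes `ξ₂` controlled injective: an element of its
kernel comes from `M₁` and therefore dies after a controlled push. Exactness at `M₃` together with
`ξ₃ ∼ 0` makes `ξ₂` controlled surjective: every element of `M₃`, pushed far enough, is killed by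
`ξ₃` and hence lifts to `M₂`. Pushing a choice of lifts past the level where kernel elements die
gives a well-defined additive, compatible controlled inverse.
-/

open scoped NNReal
open Filter

/-- An inductive system of abelian groups over `ℝ≥0`. -/
structure IndSys where
  M : ℝ≥0 → Type*
  inst : ∀ L, AddCommGroup (M L)
  map : ∀ {L L' : ℝ≥0}, L ≤ L' → (M L →+ M L')
  map_refl : ∀ (L : ℝ≥0) (x : M L), map (le_refl L) x = x
  map_comp : ∀ {L L' L'' : ℝ≥0} (h : L ≤ L') (h' : L' ≤ L'') (x : M L),
    map h' (map h x) = map (h.trans h') x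

attribute [instance] IndSys.inst

/-- A control function: non-decreasing and tending to infinity. -/
def IsControl (F : ℝ≥0 → ℝ≥0) : Prop := Monotone F ∧ Tendsto F atTop atTop

/-- A controlled homomorphism between inductive systems, with control function `F`. -/
structure CtrlHom (M N : IndSys) (F : ℝ≥0 → ℝ≥0) where
  ctrl : IsControl F
  f : ∀ L, M.M L →+ N.M (F L)
  compat : ∀ {L L' : ℝ≥0} (h : L ≤ L') (x : M.M L),
    N.map (ctrl.1 h) (f L x) = f L' (M.map h x)

/-- The identity controlled homomorphism, with control function `L ↦ L`. -/
def CtrlHom.id (M : IndSys) : CtrlHom M M (fun L => L) where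
  ctrl := ⟨monotone_id, tendsto_id⟩
  f L := AddMonoidHom.id _
  compat _ _ := rfl

/-- The zero controlled homomorphism, with control function `L ↦ L`. -/
def CtrlHom.zero (M N : IndSys) : CtrlHom M N (fun L => L) where
  ctrl := ⟨monotone_id, tendsto_id⟩
  f _ := 0
  compat _ _ := by simp

/-- Composition of controlled homomorphisms: `(ξ ∘ η)_L = ξ_{G(L)} ∘ η_L`, control `F ∘ G`. -/
def CtrlHom.comp {M N P : IndSys} {F G : ℝ≥0 → ℝ≥0}
    (ξ : CtrlHom N P F) (η : CtrlHom M N G) : CtrlHom M P (fun L => F (G L)) where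
  ctrl := ⟨ξ.ctrl.1.comp η.ctrl.1, ξ.ctrl.2.comp η.ctrl.2⟩
  f L := (ξ.f (G L)).comp (η.f L)
  compat h x := by
    simp only [AddMonoidHom.comp_apply]
    rw [ξ.compat (η.ctrl.1 h), η.compat h]

/-- `ξ` is controlled equivalent to `η` (for some control function `H ≥ F, G`). -/
def CtrlEquiv {M N : IndSys} {F G : ℝ≥0 → ℝ≥0} (ξ : CtrlHom M N F) (η : CtrlHom M N G) :
    Prop :=
  ∃ H : ℝ≥0 → ℝ≥0, IsControl H ∧
    ∃ (hF : ∀ L, F L ≤ H L) (hG : ∀ L, G L ≤ H L),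
      ∀ (L : ℝ≥0) (x : M.M L), N.map (hF L) (ξ.f L x) = N.map (hG L) (η.f L x)

/-- `ξ` is controlled equivalent to the zero homomorphism. -/
def CtrlEquivZero {M N : IndSys} {F : ℝ≥0 → ℝ≥0} (ξ : CtrlHom M N F) : Prop :=
  CtrlEquiv ξ (CtrlHom.zero M N)

/-- `ξ` is controlled equivalent to the identity homomorphism. -/
def CtrlEquivId {M : IndSys} {F : ℝ≥0 → ℝ≥0} (ξ : CtrlHom M M F) : Prop :=
  CtrlEquiv ξ (CtrlHom.id M)

/-- The sequence `M →(ξ) N →(η) P` is asymptotically exact at `N` with control functions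
`F₁, F₂`. -/
def AsympExactAt {M N P : IndSys} {F G : ℝ≥0 → ℝ≥0}
    (ξ : CtrlHom M N F) (η : CtrlHom N P G) (F₁ F₂ : ℝ≥0 → ℝ≥0) : Prop :=
  (IsControl F₁ ∧
    ∃ (h₁ : ∀ L, G (F L) ≤ F₁ L) (_h₂ : ∀ L, L ≤ F₁ L),
      ∀ (L : ℝ≥0) (x : M.M L), P.map (h₁ L) (η.f (F L) (ξ.f L x)) = 0) ∧
  (IsControl F₂ ∧
    ∃ hle : ∀ L, L ≤ F (F₂ L),
      ∀ (L : ℝ≥0) (m' : N.M L), η.f L m' = 0 →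
        ∃ m : M.M (F₂ L), ξ.f (F₂ L) m = N.map (hle L) m')

/-- An inductive system is uniformly controlled with uniform control pair `(L₀, F)`. -/
def UnifCtrlPair (M : IndSys) (L₀ : ℝ≥0) (F : ℝ≥0 → ℝ≥0) : Prop :=
  IsControl F ∧
  ∃ hle : ∀ L, L ≤ F L,
    (∀ L : ℝ≥0, L₀ ≤ L → ∀ (L' : ℝ≥0) (x : M.M L'),
      ∃ (y : M.M L) (L'' : ℝ≥0) (h : L ≤ L'') (h' : L' ≤ L''), M.map h y = M.map h' x) ∧
    (∀ (L : ℝ≥0) (x : M.M L), (∃ (L' : ℝ≥0) (h : L ≤ L'), M.map h x = 0) →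
      M.map (hle L) x = 0)

/-- An inductive system is uniformly controlled. -/
def UnifCtrl (M : IndSys) : Prop := ∃ (L₀ : ℝ≥0) (F : ℝ≥0 → ℝ≥0), UnifCtrlPair M L₀ F


lemma IsControl.comp {F G : ℝ≥0 → ℝ≥0} (hF : IsControl F) (hG : IsControl G) :
    IsControl (fun L => F (G L)) :=
  ⟨hF.1.comp hG.1, hF.2.comp hG.2⟩

lemma isControl_id_sup {G : ℝ≥0 → ℝ≥0} (hG : Monotone G) : IsControl (fun L => L ⊔ G L) :=
  ⟨monotone_id.sup hG, tendsto_atTop_mono (fun _ => le_sup_left) tendsto_id⟩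

lemma IsControl.exists_le_comp {F H : ℝ≥0 → ℝ≥0} (hF : IsControl F) (hH : Monotone H) :
    ∃ G, IsControl G ∧ (∀ L, L ≤ G L) ∧ ∀ L, H L ≤ F (G L) := by
  have hne : ∀ y, {x | y ≤ F x}.Nonempty := fun y => (hF.2.eventually_ge_atTop y).exists
  -- a pseudo-inverse of `F`; the `+ 1` is needed because the infimum need not be attained
  set inv : ℝ≥0 → ℝ≥0 := fun y => sInf {x | y ≤ F x} + 1
  have inv_mono : Monotone inv := fun a b hab =>
    add_le_add_left (csInf_le_csInf (OrderBot.bddBelow _) (hne b)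
      fun x (hx : b ≤ F x) => hab.trans hx) 1
  have le_inv : ∀ y, y ≤ F (inv y) := fun y => by
    obtain ⟨z, hz, hlt⟩ := exists_lt_of_csInf_lt (hne y) (lt_add_one (sInf {x | y ≤ F x}))
    exact hz.trans (hF.1 hlt.le)
  exact ⟨fun L => L ⊔ inv (H L), isControl_id_sup (inv_mono.comp hH), fun _ => le_sup_left,
    fun L => (le_inv (H L)).trans (hF.1 le_sup_right)⟩

lemma CtrlEquivZero.exists_map_eq_zero {M N : IndSys} {F : ℝ≥0 → ℝ≥0} {ξ : CtrlHom M N F}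
    (hz : CtrlEquivZero ξ) :
    ∃ H, IsControl H ∧ ∃ hF : ∀ L, F L ≤ H L, ∀ L (x : M.M L), N.map (hF L) (ξ.f L x) = 0 := by
  obtain ⟨H, hH, hF, _, hzero⟩ := hz
  exact ⟨H, hH, hF, fun L x => by simpa [CtrlHom.zero] using hzero L x⟩

namespace CtrlHom

variable {M N P Q : IndSys} {F G T K : ℝ≥0 → ℝ≥0}

structure IsCtrlInjective (η : CtrlHom N P G) (T : ℝ≥0 → ℝ≥0) : Prop where
  ctrl : IsControl T
  le : ∀ L, L ≤ T L
  map_eq_zero : ∀ L (a : N.M L), η.f L a = 0 → N.map (le L) a = 0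

structure IsCtrlSurjective (η : CtrlHom N P G) (K : ℝ≥0 → ℝ≥0) : Prop where
  ctrl : IsControl K
  le : ∀ L, L ≤ G (K L)
  exists_lift : ∀ L (x : P.M L), ∃ m : N.M (K L), η.f (K L) m = P.map (le L) x

lemma isCtrlInjective_of_asympExactAt {E E' : ℝ≥0 → ℝ≥0} (ξ : CtrlHom M N F)
    (η : CtrlHom N P G) (hex : AsympExactAt ξ η E E') (hz : CtrlEquivZero ξ) :
    ∃ T, η.IsCtrlInjective T := by
  obtain ⟨-, hE', hle, hexact⟩ := hex
  obtain ⟨H, hH, hF, hzero⟩ := hz.exists_map_eq_zero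
  refine ⟨fun L => H (E' L), ⟨hH.comp hE', fun L => (hle L).trans (hF (E' L)), ?_⟩⟩
  intro L a ha
  obtain ⟨m, hm⟩ := hexact L a ha
  rw [← N.map_comp (hle L) (hF (E' L)), ← hm, hzero]

lemma isCtrlSurjective_of_asympExactAt {E E' : ℝ≥0 → ℝ≥0} (η : CtrlHom N P G)
    (θ : CtrlHom P Q F) (hex : AsympExactAt η θ E E') (hz : CtrlEquivZero θ) :
    ∃ K, η.IsCtrlSurjective K := by
  obtain ⟨-, hE', hle, hexact⟩ := hex
  obtain ⟨H, hH, hF, hzero⟩ := hz.exists_map_eq_zero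
  obtain ⟨D, hD, hLD, hHD⟩ := θ.ctrl.exists_le_comp hH.1
  refine ⟨fun L => E' (D L), ⟨hE'.comp hD, fun L => (hLD L).trans (hle (D L)), fun L x => ?_⟩⟩
  have hθx : θ.f (D L) (P.map (hLD L) x) = 0 := by
    rw [← θ.compat, ← Q.map_comp (hF L) (hHD L), hzero, map_zero]
  obtain ⟨m, hm⟩ := hexact (D L) _ hθx
  exact ⟨m, by rw [hm, P.map_comp]⟩

section Inverse

variable {η : CtrlHom N P G}

lemma IsCtrlInjective.map_eq (hi : η.IsCtrlInjective T) {L : ℝ≥0} {a b : N.M L}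
    (hab : η.f L a = η.f L b) : N.map (hi.le L) a = N.map (hi.le L) b := by
  rw [← sub_eq_zero, ← map_sub]
  exact hi.map_eq_zero L _ (by rw [map_sub, hab, sub_self])

lemma IsCtrlInjective.map_eq_map (hi : η.IsCtrlInjective T) {L₁ L₂ J L' : ℝ≥0}
    (h₁ : L₁ ≤ J) (h₂ : L₂ ≤ J) (hJ : T J ≤ L') {a : N.M L₁} {b : N.M L₂}
    (hab : P.map (η.ctrl.1 h₁) (η.f L₁ a) = P.map (η.ctrl.1 h₂) (η.f L₂ b))
    (p : L₁ ≤ L') (q : L₂ ≤ L') : N.map p a = N.map q b := by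
  have hJ' := hi.map_eq (a := N.map h₁ a) (b := N.map h₂ b) (by rw [← η.compat, ← η.compat, hab])
  simpa only [N.map_comp] using congrArg (N.map hJ) hJ'

noncomputable def IsCtrlSurjective.lift (hs : η.IsCtrlSurjective K) (L : ℝ≥0) (x : P.M L) :
    N.M (K L) :=
  (hs.exists_lift L x).choose

lemma IsCtrlSurjective.apply_lift (hs : η.IsCtrlSurjective K) (L : ℝ≥0) (x : P.M L) :
    η.f (K L) (hs.lift L x) = P.map (hs.le L) x :=
  (hs.exists_lift L x).choose_spec

/-- Pushing the chosen lifts to level `T (K L)` makes the choice irrelevant. -/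
noncomputable def ctrlInv (hi : η.IsCtrlInjective T) (hs : η.IsCtrlSurjective K) :
    CtrlHom P N (fun L => T (K L)) where
  ctrl := hi.ctrl.comp hs.ctrl
  f L := AddMonoidHom.mk' (fun x => N.map (hi.le (K L)) (hs.lift L x)) fun x y => by
    rw [← map_add]
    exact hi.map_eq (by rw [map_add, hs.apply_lift, hs.apply_lift, hs.apply_lift, map_add])
  compat {L L'} h x := by
    simp only [AddMonoidHom.mk'_apply, N.map_comp]
    exact hi.map_eq_map (hs.ctrl.1 h) le_rfl le_rfl
      (by simp only [hs.apply_lift, P.map_comp]) _ _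

lemma ctrlEquivId_comp_ctrlInv (hi : η.IsCtrlInjective T) (hs : η.IsCtrlSurjective K) :
    CtrlEquivId (η.comp (ctrlInv hi hs)) := by
  refine ⟨fun L => G (T (K L)), η.ctrl.comp (hi.ctrl.comp hs.ctrl), fun _ => le_rfl,
    fun L => (hs.le L).trans (η.ctrl.1 (hi.le (K L))), fun L x => ?_⟩
  simp only [CtrlHom.comp, ctrlInv, CtrlHom.id, AddMonoidHom.comp_apply,
    AddMonoidHom.mk'_apply, AddMonoidHom.id_apply, P.map_refl]
  rw [← η.compat, hs.apply_lift, P.map_comp]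

lemma ctrlEquivId_ctrlInv_comp (hi : η.IsCtrlInjective T) (hs : η.IsCtrlSurjective K) :
    CtrlEquivId ((ctrlInv hi hs).comp η) := by
  refine ⟨fun L => T (L ⊔ K (G L)), hi.ctrl.comp (isControl_id_sup (hs.ctrl.1.comp η.ctrl.1)),
    fun L => hi.ctrl.1 le_sup_right, fun L => le_sup_left.trans (hi.le _), fun L y => ?_⟩
  simp only [CtrlHom.comp, ctrlInv, CtrlHom.id, AddMonoidHom.comp_apply,
    AddMonoidHom.mk'_apply, AddMonoidHom.id_apply, N.map_comp]
  exact hi.map_eq_map le_sup_right le_sup_left le_rfl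
    (by rw [hs.apply_lift, P.map_comp]) _ _

end Inverse

end CtrlHom

/-- if the outer maps of an asymptotically exact sequence are controlled
equivalent to zero, then the middle map is a controlled isomorphism. -/
theorem stmt16 (M₁ M₂ M₃ M₄ : IndSys) (F₁ F₂ F₃ : ℝ≥0 → ℝ≥0)
    (ξ₁ : CtrlHom M₁ M₂ F₁) (ξ₂ : CtrlHom M₂ M₃ F₂) (ξ₃ : CtrlHom M₃ M₄ F₃)
    (hex₂ : ∃ E E' : ℝ≥0 → ℝ≥0, AsympExactAt ξ₁ ξ₂ E E')
    (hex₃ : ∃ E E' : ℝ≥0 → ℝ≥0, AsympExactAt ξ₂ ξ₃ E E')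
    (hz₁ : CtrlEquivZero ξ₁) (hz₃ : CtrlEquivZero ξ₃) :
    ∃ (Fs : ℝ≥0 → ℝ≥0) (s : CtrlHom M₃ M₂ Fs),
      CtrlEquivId (ξ₂.comp s) ∧ CtrlEquivId (s.comp ξ₂) := by
  obtain ⟨_, _, hex₂⟩ := hex₂
  obtain ⟨_, _, hex₃⟩ := hex₃
  obtain ⟨_, hi⟩ := CtrlHom.isCtrlInjective_of_asympExactAt ξ₁ ξ₂ hex₂ hz₁
  obtain ⟨_, hs⟩ := CtrlHom.isCtrlSurjective_of_asympExactAt ξ₂ ξ₃ hex₃ hz₃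
  exact ⟨_, CtrlHom.ctrlInv hi hs, CtrlHom.ctrlEquivId_comp_ctrlInv hi hs,
    CtrlHom.ctrlEquivId_ctrlInv_comp hi hs⟩
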